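/- arXiv:2210.13131 — 2 statements merged into one kernel-verified Lean document; each statement's English description precedes it below -/
import Mathlib

section
/- Assume the SBP setup and let a, b > 0. Let L_c be the 4×m matrix whose rows are e_lᵀ, d_{1;l}ᵀ, e_rᵀ, d_{1;r}ᵀ; assume L_c H⁻¹ L_cᵀ is invertible and let P be the associated projection. Let v : ℝ → ℝ^m be twice continuously differentiable and satisfy b v″(t) = −a P D₄ P v(t) for all t. Then the energy E(t) = b ‖v′(t)‖²_H + a (P v(t))ᵀ N (P v(t)) is non-negative and constant in t. (This is the energy stability of the SBP-projection discretization of the dynamic beam equation with clamped boundary conditions.) -/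
open Matrix

/-- Derivative of a matrix-vector product. -/
lemma hasDerivAt_mulVec' {m : ℕ} (M : Matrix (Fin m) (Fin m) ℝ)
    {u : ℝ → Fin m → ℝ} {u' : Fin m → ℝ} {t : ℝ} (h : HasDerivAt u u' t) :
    HasDerivAt (fun s => M *ᵥ u s) (M *ᵥ u') t := by
  rw [hasDerivAt_pi]
  intro i
  simp only [Matrix.mulVec, dotProduct]
  exact HasDerivAt.fun_sum fun j _ => ((hasDerivAt_pi.mp h j).const_mul (M i j))

/-- Derivative of a dot product. -/
lemma hasDerivAt_dotProduct' {m : ℕ}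
    {f g : ℝ → Fin m → ℝ} {f' g' : Fin m → ℝ} {t : ℝ}
    (hf : HasDerivAt f f' t) (hg : HasDerivAt g g' t) :
    HasDerivAt (fun s => f s ⬝ᵥ g s) (f' ⬝ᵥ g t + f t ⬝ᵥ g') t := by
  simp only [dotProduct]
  rw [← Finset.sum_add_distrib]
  exact HasDerivAt.fun_sum fun i _ =>
    ((hasDerivAt_pi.mp hf i).mul (hasDerivAt_pi.mp hg i))

/-- Energy stability of the SBP-projection discretization of the dynamic beam
equation with clamped boundary conditions. -/
theorem sbp_projection_clamped_energy_stable
    (m : ℕ) (hm : 1 ≤ m)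
    (H N : Matrix (Fin m) (Fin m) ℝ)
    (hHdiag : H.IsDiag) (hH : H.PosDef) (hN : N.PosSemidef)
    (el er d1l d1r d2l d2r d3l d3r : Fin m → ℝ)
    (D4 : Matrix (Fin m) (Fin m) ℝ)
    (hD4 : D4 = H⁻¹ * (N + vecMulVec el d3l + vecMulVec d1l d2l
      + vecMulVec er d3r - vecMulVec d1r d2r))
    (Lc : Matrix (Fin 4) (Fin m) ℝ)
    (hLc : Lc = Matrix.of ![el, d1l, er, d1r])
    (hLcInv : IsUnit (Lc * H⁻¹ * Lcᵀ))
    (P : Matrix (Fin m) (Fin m) ℝ)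
    (hP : P = 1 - H⁻¹ * Lcᵀ * (Lc * H⁻¹ * Lcᵀ)⁻¹ * Lc)
    (a b : ℝ) (ha : 0 < a) (hb : 0 < b)
    (v : ℝ → Fin m → ℝ) (hv : ContDiff ℝ 2 v)
    (hode : ∀ t : ℝ, b • deriv (deriv v) t = -(a • ((P * D4 * P) *ᵥ v t)))
    (E : ℝ → ℝ)
    (hE : ∀ t : ℝ, E t =
      b * (deriv v t ⬝ᵥ (H *ᵥ deriv v t))
      + a * ((P *ᵥ v t) ⬝ᵥ (N *ᵥ (P *ᵥ v t)))) :
    (∀ t : ℝ, 0 ≤ E t) ∧ (∀ t s : ℝ, E t = E s) := by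
  -- Basic matrix facts
  have hHdet : IsUnit H.det := hH.det_pos.ne'.isUnit
  have hHsymm : Hᵀ = H := hH.1
  have hNsymm : Nᵀ = N := hN.1
  have hHinv : H * H⁻¹ = 1 := Matrix.mul_nonsing_inv H hHdet
  have hHinv' : H⁻¹ * H = 1 := Matrix.nonsing_inv_mul H hHdet
  have hHinvsymm : (H⁻¹)ᵀ = H⁻¹ := by
    rw [Matrix.transpose_nonsing_inv, hHsymm]
  set S := Lc * H⁻¹ * Lcᵀ with hS
  have hSdet : IsUnit S.det := (Matrix.isUnit_iff_isUnit_det S).mp hLcInv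
  have hSsymm : Sᵀ = S := by
    rw [hS, Matrix.transpose_mul, Matrix.transpose_mul, Matrix.transpose_transpose,
      hHinvsymm, Matrix.mul_assoc]
  have hMsymm : (S⁻¹)ᵀ = S⁻¹ := by
    rw [Matrix.transpose_nonsing_inv, hSsymm]
  -- H P = Pᵀ H
  have hHP : H * P = Pᵀ * H := by
    rw [hP]
    have h1 : H * (1 - H⁻¹ * Lcᵀ * S⁻¹ * Lc) = H - Lcᵀ * S⁻¹ * Lc := by
      rw [Matrix.mul_sub, Matrix.mul_one]
      congr 1
      rw [show H⁻¹ * Lcᵀ * S⁻¹ * Lc = H⁻¹ * (Lcᵀ * S⁻¹ * Lc) by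
        simp only [Matrix.mul_assoc], ← Matrix.mul_assoc, hHinv, Matrix.one_mul]
    have h2 : (1 - H⁻¹ * Lcᵀ * S⁻¹ * Lc)ᵀ * H = H - Lcᵀ * S⁻¹ * Lc := by
      rw [Matrix.transpose_sub, Matrix.transpose_one, Matrix.sub_mul, Matrix.one_mul]
      congr 1
      simp only [Matrix.transpose_mul, hHinvsymm, hMsymm, Matrix.transpose_transpose]
      simp only [Matrix.mul_assoc, hHinv', Matrix.mul_one]
    rw [h1, h2]
  -- Lc P = 0
  have hLP : Lc * P = 0 := by
    rw [hP, Matrix.mul_sub, Matrix.mul_one]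
    have : Lc * (H⁻¹ * Lcᵀ * S⁻¹ * Lc) = Lc := by
      rw [show Lc * (H⁻¹ * Lcᵀ * S⁻¹ * Lc) = (Lc * H⁻¹ * Lcᵀ) * S⁻¹ * Lc by
        simp only [Matrix.mul_assoc], ← hS, Matrix.mul_nonsing_inv S hSdet,
        Matrix.one_mul]
    rw [this, sub_self]
  -- rows of Lc annihilate P from the left
  have hrow : ∀ i : Fin 4, (Lc i) ᵥ* P = 0 := by
    intro i
    funext j
    have := congrFun (congrFun hLP i) j
    simpa [Matrix.mul_apply, Matrix.vecMul, dotProduct] using this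
  have hel : el ᵥ* P = 0 := by have := hrow 0; rwa [hLc] at this
  have hd1l : d1l ᵥ* P = 0 := by have := hrow 1; rwa [hLc] at this
  have her : er ᵥ* P = 0 := by have := hrow 2; rwa [hLc] at this
  have hd1r : d1r ᵥ* P = 0 := by have := hrow 3; rwa [hLc] at this
  -- Pᵀ kills the rank-one terms
  have hrank1 : ∀ (x y : Fin m → ℝ), x ᵥ* P = 0 → Pᵀ * vecMulVec x y = 0 := by
    intro x y hx
    ext i j
    have hxi : ∑ k, x k * P k i = 0 := by
      have := congrFun hx i
      simpa [Matrix.vecMul, dotProduct] using this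
    simp only [Matrix.mul_apply, Matrix.vecMulVec_apply, Matrix.transpose_apply,
      Matrix.zero_apply]
    calc ∑ k, P k i * (x k * y j) = (∑ k, x k * P k i) * y j := by
          rw [Finset.sum_mul]; congr 1; funext k; ring
      _ = 0 := by rw [hxi, zero_mul]
  -- key identity : Pᵀ * (H * D4) * P = Pᵀ * N * P
  have hHD4 : H * D4 = N + vecMulVec el d3l + vecMulVec d1l d2l
      + vecMulVec er d3r - vecMulVec d1r d2r := by
    rw [hD4, ← Matrix.mul_assoc, hHinv, Matrix.one_mul]
  have hkey : Pᵀ * (H * D4) * P = Pᵀ * N * P := by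
    rw [hHD4]
    simp only [Matrix.mul_add, Matrix.mul_sub, Matrix.add_mul, Matrix.sub_mul,
      hrank1 el d3l hel, hrank1 d1l d2l hd1l, hrank1 er d3r her, hrank1 d1r d2r hd1r,
      Matrix.zero_mul, add_zero, sub_zero]
  -- P is idempotent
  have hPP : P * P = P := by
    nth_rewrite 1 [hP]
    rw [Matrix.sub_mul, Matrix.one_mul]
    have h0 : H⁻¹ * Lcᵀ * S⁻¹ * Lc * P = 0 := by
      rw [Matrix.mul_assoc (H⁻¹ * Lcᵀ * S⁻¹) Lc P, hLP, Matrix.mul_zero]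
    rw [h0, sub_zero]
  -- H * (P * D4 * P) = Pᵀ * N * P
  have hHPD4P : H * (P * D4 * P) = Pᵀ * N * P := by
    calc H * (P * D4 * P) = (H * P) * D4 * P := by simp only [Matrix.mul_assoc]
      _ = (Pᵀ * H) * D4 * P := by rw [hHP]
      _ = Pᵀ * (H * D4) * P := by simp only [Matrix.mul_assoc]
      _ = Pᵀ * N * P := hkey
  -- scalar identity used twice
  have hscal' : ∀ x y : Fin m → ℝ,
      x ⬝ᵥ (H *ᵥ ((P * D4 * P) *ᵥ y)) = (P *ᵥ x) ⬝ᵥ (N *ᵥ (P *ᵥ y)) := by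
    intro x y
    rw [Matrix.mulVec_mulVec, hHPD4P]
    rw [← Matrix.mulVec_mulVec, ← Matrix.mulVec_mulVec]
    rw [Matrix.dotProduct_mulVec x Pᵀ, Matrix.vecMul_transpose]
  -- symmetry of the N-form
  have hNsw : ∀ x y : Fin m → ℝ, x ⬝ᵥ (N *ᵥ y) = y ⬝ᵥ (N *ᵥ x) := by
    intro x y
    rw [Matrix.dotProduct_mulVec, dotProduct_comm, ← Matrix.mulVec_transpose,
      hNsymm]
  -- symmetry of the H-form
  have hHsw : ∀ x y : Fin m → ℝ, x ⬝ᵥ (H *ᵥ y) = y ⬝ᵥ (H *ᵥ x) := by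
    intro x y
    rw [Matrix.dotProduct_mulVec, dotProduct_comm, ← Matrix.mulVec_transpose,
      hHsymm]
  -- differentiability
  have hv2 : ContDiff ℝ ((1 : ℕ∞) + 1) v := by
    convert hv using 2
    norm_num
  have hdv : Differentiable ℝ v := (contDiff_succ_iff_deriv.mp hv2).1
  have hcw : ContDiff ℝ (1 : ℕ∞) (deriv v) := (contDiff_succ_iff_deriv.mp hv2).2.2
  have hdw : Differentiable ℝ (deriv v) := hcw.differentiable (by simp)
  set w := deriv v with hw
  -- derivative of E is zero
  have hEderiv : ∀ t : ℝ, HasDerivAt E 0 t := by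
    intro t
    have hvt : HasDerivAt v (w t) t := (hdv t).hasDerivAt
    have hwt : HasDerivAt w (deriv w t) t := (hdw t).hasDerivAt
    have h1 : HasDerivAt (fun s => w s ⬝ᵥ (H *ᵥ w s))
        (deriv w t ⬝ᵥ (H *ᵥ w t) + w t ⬝ᵥ (H *ᵥ deriv w t)) t :=
      hasDerivAt_dotProduct' hwt (hasDerivAt_mulVec' H hwt)
    have h2 : HasDerivAt (fun s => (P *ᵥ v s) ⬝ᵥ (N *ᵥ (P *ᵥ v s)))
        ((P *ᵥ w t) ⬝ᵥ (N *ᵥ (P *ᵥ v t)) + (P *ᵥ v t) ⬝ᵥ (N *ᵥ (P *ᵥ w t))) t :=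
      hasDerivAt_dotProduct' (hasDerivAt_mulVec' P hvt)
        (hasDerivAt_mulVec' N (hasDerivAt_mulVec' P hvt))
    have hsum : HasDerivAt E
        (b * (deriv w t ⬝ᵥ (H *ᵥ w t) + w t ⬝ᵥ (H *ᵥ deriv w t))
         + a * ((P *ᵥ w t) ⬝ᵥ (N *ᵥ (P *ᵥ v t)) + (P *ᵥ v t) ⬝ᵥ (N *ᵥ (P *ᵥ w t)))) t := by
      have : HasDerivAt (fun s => b * (w s ⬝ᵥ (H *ᵥ w s))
          + a * ((P *ᵥ v s) ⬝ᵥ (N *ᵥ (P *ᵥ v s))))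
          (b * (deriv w t ⬝ᵥ (H *ᵥ w t) + w t ⬝ᵥ (H *ᵥ deriv w t))
           + a * ((P *ᵥ w t) ⬝ᵥ (N *ᵥ (P *ᵥ v t)) + (P *ᵥ v t) ⬝ᵥ (N *ᵥ (P *ᵥ w t)))) t :=
        (h1.const_mul b).add (h2.const_mul a)
      convert this using 1
      funext s
      rw [hE s]
    -- show the derivative value is zero
    have hodet := hode t
    have hb1 : b * (deriv w t ⬝ᵥ (H *ᵥ w t)) = -(a * ((P *ᵥ w t) ⬝ᵥ (N *ᵥ (P *ᵥ v t)))) := by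
      have h := congrArg (fun z => z ⬝ᵥ (H *ᵥ w t)) hodet
      simp only [smul_dotProduct, neg_dotProduct, smul_eq_mul] at h
      rw [h, hHsw ((P * D4 * P) *ᵥ v t) (w t), hscal' (w t) (v t)]
    have hb2 : b * (w t ⬝ᵥ (H *ᵥ deriv w t)) = -(a * ((P *ᵥ w t) ⬝ᵥ (N *ᵥ (P *ᵥ v t)))) := by
      have h := congrArg (fun z => w t ⬝ᵥ (H *ᵥ z)) hodet
      simp only [Matrix.mulVec_smul, Matrix.mulVec_neg, dotProduct_neg,
        dotProduct_smul, smul_eq_mul] at h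
      rw [h, hscal' (w t) (v t)]
    have hzero : b * (deriv w t ⬝ᵥ (H *ᵥ w t) + w t ⬝ᵥ (H *ᵥ deriv w t))
        + a * ((P *ᵥ w t) ⬝ᵥ (N *ᵥ (P *ᵥ v t)) + (P *ᵥ v t) ⬝ᵥ (N *ᵥ (P *ᵥ w t))) = 0 := by
      rw [mul_add, mul_add, hb1, hb2, hNsw (P *ᵥ v t) (P *ᵥ w t)]
      ring
    rw [hzero] at hsum
    exact hsum
  constructor
  · intro t
    rw [hE t]
    have h1 : 0 ≤ w t ⬝ᵥ (H *ᵥ w t) := by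
      have := hH.posSemidef.dotProduct_mulVec_nonneg (w t); simpa using this
    have h2 : 0 ≤ (P *ᵥ v t) ⬝ᵥ (N *ᵥ (P *ᵥ v t)) := by
      have := hN.dotProduct_mulVec_nonneg (P *ᵥ v t); simpa using this
    have := add_nonneg (mul_nonneg hb.le h1) (mul_nonneg ha.le h2)
    exact this
  · intro t s
    exact is_const_of_deriv_eq_zero (fun x => (hEderiv x).differentiableAt)
      (fun x => (hEderiv x).deriv) t s
end

section
/- Assume the SBP setup and let a, b > 0. Let L_f be the 4×m matrix whose rows are d_{2;l}ᵀ, d_{3;l}ᵀ, d_{2;r}ᵀ, d_{3;r}ᵀ; assume L_f H⁻¹ L_fᵀ is invertible and let P be the associated projection. Let v : ℝ → ℝ^m be twice continuously differentiable and satisfy b v″(t) = −a P D₄ P v(t) for all t. Then the energy E(t) = b ‖v′(t)‖²_H + a (P v(t))ᵀ N (P v(t)) is non-negative and constant in t. (This is the energy stability of the SBP-projection discretization of the dynamic beam equation with free boundary conditions.) -/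
open Matrix

lemma hasDerivAt_dotmul {m : ℕ} (M : Matrix (Fin m) (Fin m) ℝ)
    (f g : ℝ → Fin m → ℝ) (f' g' : Fin m → ℝ) (t : ℝ)
    (hf : ∀ i, HasDerivAt (fun t => f t i) (f' i) t)
    (hg : ∀ i, HasDerivAt (fun t => g t i) (g' i) t) :
    HasDerivAt (fun t => f t ⬝ᵥ (M *ᵥ g t))
      (f' ⬝ᵥ (M *ᵥ g t) + f t ⬝ᵥ (M *ᵥ g')) t := by
  have h : ∀ i ∈ Finset.univ, HasDerivAt (fun t => f t i * ∑ j, M i j * g t j)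
      (f' i * (∑ j, M i j * g t j) + f t i * (∑ j, M i j * g' j)) t := by
    intro i _
    exact (hf i).mul (HasDerivAt.fun_sum fun j _ => (hg j).const_mul (M i j))
  have h2 := HasDerivAt.fun_sum h
  simp only [dotProduct, mulVec, Finset.sum_add_distrib] at h2 ⊢
  exact h2

lemma dot_symm {m : ℕ} (M : Matrix (Fin m) (Fin m) ℝ) (hM : Mᵀ = M)
    (x y : Fin m → ℝ) : x ⬝ᵥ M *ᵥ y = y ⬝ᵥ M *ᵥ x := by
  have h1 : x ᵥ* M = M *ᵥ x := by
    conv_lhs => rw [← hM]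
    exact Matrix.vecMul_transpose M x
  rw [Matrix.dotProduct_mulVec, h1, dotProduct_comm]

lemma vecMulVec_mul' {m : ℕ} (x y : Fin m → ℝ) (P : Matrix (Fin m) (Fin m) ℝ) :
    vecMulVec x y * P = vecMulVec x (y ᵥ* P) := by
  ext i j
  simp [vecMulVec_apply, Matrix.mul_apply, vecMul, dotProduct, Finset.mul_sum, mul_assoc]

/-- Energy stability of the SBP-projection discretization of the dynamic beam
equation with free boundary conditions. -/
theorem sbp_projection_free_energy_stable
    (m : ℕ) (hm : 1 ≤ m)
    (H N : Matrix (Fin m) (Fin m) ℝ)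
    (hHdiag : H.IsDiag) (hH : H.PosDef) (hN : N.PosSemidef)
    (el er d1l d1r d2l d2r d3l d3r : Fin m → ℝ)
    (D4 : Matrix (Fin m) (Fin m) ℝ)
    (hD4 : D4 = H⁻¹ * (N + vecMulVec el d3l + vecMulVec d1l d2l
      + vecMulVec er d3r - vecMulVec d1r d2r))
    (Lc : Matrix (Fin 4) (Fin m) ℝ)
    (hLc : Lc = Matrix.of ![d2l, d3l, d2r, d3r])
    (hLcInv : IsUnit (Lc * H⁻¹ * Lcᵀ))
    (P : Matrix (Fin m) (Fin m) ℝ)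
    (hP : P = 1 - H⁻¹ * Lcᵀ * (Lc * H⁻¹ * Lcᵀ)⁻¹ * Lc)
    (a b : ℝ) (ha : 0 < a) (hb : 0 < b)
    (v : ℝ → Fin m → ℝ) (hv : ContDiff ℝ 2 v)
    (hode : ∀ t : ℝ, b • deriv (deriv v) t = -(a • ((P * D4 * P) *ᵥ v t)))
    (E : ℝ → ℝ)
    (hE : ∀ t : ℝ, E t =
      b * (deriv v t ⬝ᵥ (H *ᵥ deriv v t))
      + a * ((P *ᵥ v t) ⬝ᵥ (N *ᵥ (P *ᵥ v t)))) :
    (∀ t : ℝ, 0 ≤ E t) ∧ (∀ t s : ℝ, E t = E s) := by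
  -- Symmetry facts
  have hHsymm : Hᵀ = H := hH.1.eq
  have hNsymm : Nᵀ = N := hN.1.eq
  have hHdet : IsUnit H.det := (Matrix.isUnit_iff_isUnit_det H).1 hH.isUnit
  have hHHinv : H * H⁻¹ = 1 := Matrix.mul_nonsing_inv H hHdet
  have hHinvH : H⁻¹ * H = 1 := Matrix.nonsing_inv_mul H hHdet
  have hHinvsymm : (H⁻¹)ᵀ = H⁻¹ := by rw [Matrix.transpose_nonsing_inv, hHsymm]
  set M := Lc * H⁻¹ * Lcᵀ with hM
  have hMdet : IsUnit M.det := (Matrix.isUnit_iff_isUnit_det M).1 hLcInv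
  have hMsymm : Mᵀ = M := by
    rw [hM]; simp [Matrix.transpose_mul, hHinvsymm, Matrix.mul_assoc]
  have hMinvsymm : (M⁻¹)ᵀ = M⁻¹ := by rw [Matrix.transpose_nonsing_inv, hMsymm]
  -- Lc * P = 0
  have hLcP : Lc * P = 0 := by
    rw [hP, Matrix.mul_sub, Matrix.mul_one]
    have h1 : Lc * (H⁻¹ * Lcᵀ * M⁻¹ * Lc) = (M * M⁻¹) * Lc := by
      rw [hM, Matrix.mul_assoc (Lc * H⁻¹ * Lcᵀ), ← Matrix.mul_assoc Lc,
        ← Matrix.mul_assoc Lc, ← Matrix.mul_assoc Lc, Matrix.mul_assoc (Lc * H⁻¹ * Lcᵀ)]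
    rw [h1, Matrix.mul_nonsing_inv _ hMdet, Matrix.one_mul, sub_self]
  -- each boundary row kills P
  have hcomp : ∀ i : Fin 4, ((Matrix.of ![d2l, d3l, d2r, d3r] : Matrix (Fin 4) (Fin m) ℝ) i) ᵥ* P = 0 := by
    intro i
    funext j
    have h2 := congrFun (congrFun hLcP i) j
    rw [hLc] at h2
    simpa [Matrix.mul_apply, vecMul, dotProduct] using h2
  have hd2l : d2l ᵥ* P = 0 := hcomp 0
  have hd3l : d3l ᵥ* P = 0 := hcomp 1
  have hd2r : d2r ᵥ* P = 0 := hcomp 2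
  have hd3r : d3r ᵥ* P = 0 := hcomp 3
  -- H * P = Pᵀ * H
  have hHP : H * P = Pᵀ * H := by
    rw [hP]
    simp only [Matrix.mul_sub, Matrix.sub_mul, Matrix.mul_one, Matrix.one_mul,
      Matrix.transpose_sub, Matrix.transpose_one, Matrix.transpose_mul, hMinvsymm,
      hHinvsymm, Matrix.transpose_transpose]
    congr 1
    simp only [Matrix.mul_assoc, Matrix.mul_nonsing_inv_cancel_left _ _ hHdet, hHinvH,
      Matrix.mul_one]
  -- key matrix identity
  have hHD4 : H * D4 = N + vecMulVec el d3l + vecMulVec d1l d2l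
      + vecMulVec er d3r - vecMulVec d1r d2r := by
    rw [hD4, ← Matrix.mul_assoc, hHHinv, Matrix.one_mul]
  have hNXP : (N + vecMulVec el d3l + vecMulVec d1l d2l
      + vecMulVec er d3r - vecMulVec d1r d2r) * P = N * P := by
    simp only [Matrix.add_mul, Matrix.sub_mul, vecMulVec_mul', hd2l, hd3l, hd2r, hd3r]
    have hz : ∀ x : Fin m → ℝ, vecMulVec x (0 : Fin m → ℝ) = 0 := by
      intro x; ext i j; simp [vecMulVec_apply]
    simp [hz]
  have hkey : H * (P * D4 * P) = Pᵀ * N * P := by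
    have h1 : H * (P * D4 * P) = (H * P) * (D4 * P) := by
      rw [Matrix.mul_assoc P, ← Matrix.mul_assoc H]
    rw [h1, hHP, Matrix.mul_assoc Pᵀ, ← Matrix.mul_assoc H, hHD4, hNXP, ← Matrix.mul_assoc]
  -- differentiability of v
  have hv1 : Differentiable ℝ v := hv.differentiable (by norm_num)
  have hv2 : Differentiable ℝ (deriv v) := by
    have h2 : ContDiff ℝ ((1 : WithTop ℕ∞) + 1) v := by
      convert hv using 2; norm_num
    exact ((contDiff_succ_iff_deriv.mp h2).2.2).differentiable one_ne_zero
  -- the full derivative of E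
  have hEderiv : ∀ t : ℝ, HasDerivAt E 0 t := by
    intro t
    set w1 := deriv v t with hw1
    set w2 := deriv (deriv v) t with hw2
    have hdv : ∀ i, HasDerivAt (fun t => deriv v t i) (w2 i) t :=
      hasDerivAt_pi.mp (hv2 t).hasDerivAt
    have hvv : ∀ i, HasDerivAt (fun t => v t i) (w1 i) t :=
      hasDerivAt_pi.mp (hv1 t).hasDerivAt
    have hPv : ∀ i, HasDerivAt (fun t => (P *ᵥ v t) i) ((P *ᵥ w1) i) t := by
      intro i
      have : HasDerivAt (fun t => ∑ j, P i j * v t j) (∑ j, P i j * w1 j) t :=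
        HasDerivAt.fun_sum fun j _ => (hvv j).const_mul (P i j)
      simpa [mulVec, dotProduct] using this
    have hA : HasDerivAt (fun t => deriv v t ⬝ᵥ (H *ᵥ deriv v t))
        (w2 ⬝ᵥ (H *ᵥ w1) + w1 ⬝ᵥ (H *ᵥ w2)) t :=
      hasDerivAt_dotmul H (deriv v) (deriv v) w2 w2 t hdv hdv
    have hB : HasDerivAt (fun t => (P *ᵥ v t) ⬝ᵥ (N *ᵥ (P *ᵥ v t)))
        ((P *ᵥ w1) ⬝ᵥ (N *ᵥ (P *ᵥ v t)) + (P *ᵥ v t) ⬝ᵥ (N *ᵥ (P *ᵥ w1))) t :=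
      hasDerivAt_dotmul N (fun t => P *ᵥ v t) (fun t => P *ᵥ v t) (P *ᵥ w1) (P *ᵥ w1) t hPv hPv
    have hEfun : E = fun t => b * (deriv v t ⬝ᵥ (H *ᵥ deriv v t))
        + a * ((P *ᵥ v t) ⬝ᵥ (N *ᵥ (P *ᵥ v t))) := funext hE
    rw [hEfun]
    have hcomb := (hA.const_mul b).add (hB.const_mul a)
    refine hcomb.congr_deriv ?_
    -- show the derivative value is 0
    have hsym1 : w2 ⬝ᵥ (H *ᵥ w1) = w1 ⬝ᵥ (H *ᵥ w2) := dot_symm H hHsymm w2 w1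
    have hsym2 : (P *ᵥ v t) ⬝ᵥ (N *ᵥ (P *ᵥ w1)) = (P *ᵥ w1) ⬝ᵥ (N *ᵥ (P *ᵥ v t)) :=
      dot_symm N hNsymm (P *ᵥ v t) (P *ᵥ w1)
    rw [hsym1, hsym2]
    -- use the ODE
    have hode' : b • w2 = -(a • ((P * D4 * P) *ᵥ v t)) := hode t
    have hmain : b * (w1 ⬝ᵥ (H *ᵥ w2)) = -(a * ((P *ᵥ w1) ⬝ᵥ (N *ᵥ (P *ᵥ v t)))) := by
      have e1 : b * (w1 ⬝ᵥ (H *ᵥ w2)) = w1 ⬝ᵥ (H *ᵥ (b • w2)) := by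
        rw [Matrix.mulVec_smul, dotProduct_smul, smul_eq_mul]
      rw [e1, hode', Matrix.mulVec_neg, Matrix.mulVec_smul, dotProduct_neg,
        dotProduct_smul, smul_eq_mul, Matrix.mulVec_mulVec, hkey]
      congr 2
      rw [← Matrix.mulVec_mulVec, ← Matrix.mulVec_mulVec, Matrix.dotProduct_mulVec w1 Pᵀ,
        Matrix.vecMul_transpose]
    linarith [hmain]
  -- conclusion
  constructor
  · intro t
    rw [hE t]
    have h1 : 0 ≤ deriv v t ⬝ᵥ (H *ᵥ deriv v t) := by
      have := hH.posSemidef.dotProduct_mulVec_nonneg (deriv v t); simpa using this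
    have h2 : 0 ≤ (P *ᵥ v t) ⬝ᵥ (N *ᵥ (P *ᵥ v t)) := by
      have := hN.dotProduct_mulVec_nonneg (P *ᵥ v t); simpa using this
    positivity
  · intro t s
    exact is_const_of_deriv_eq_zero (fun x => (hEderiv x).differentiableAt)
      (fun x => (hEderiv x).deriv) t s
end
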